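/- In a Boolean inverse semigroup, if t ≤ s and v ≤ u then (s∖t)(u∖v) = su∖(sv ∨ tu). -/

import Mathlib

/-- An inverse semigroup: every element has a unique (generalized) inverse. -/
class InverseSemigroup (S : Type*) extends Semigroup S, Inv S where
  mul_inv_mul : ∀ s : S, s * s⁻¹ * s = s
  inv_mul_inv : ∀ s : S, s⁻¹ * s * s⁻¹ = s⁻¹
  inv_unique : ∀ s t : S, s * t * s = s → t * s * t = t → t = s⁻¹

/-- An inverse semigroup with a zero element. -/
class InverseSemigroupWithZero (S : Type*) extends InverseSemigroup S, Zero S where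
  zero_mul : ∀ s : S, 0 * s = 0
  mul_zero : ∀ s : S, s * 0 = 0

section Defs
variable {S : Type*}

/-- The natural partial order on an inverse semigroup: `a ≤ b` iff `a = b (a⁻¹ a)`. -/
def nle [InverseSemigroup S] (a b : S) : Prop := a = b * (a⁻¹ * a)

/-- Compatibility: `a⁻¹ b` and `a b⁻¹` are both idempotent. -/
def compat [InverseSemigroup S] (a b : S) : Prop :=
  IsIdempotentElem (a⁻¹ * b) ∧ IsIdempotentElem (a * b⁻¹)

/-- Orthogonality: `a⁻¹ b = 0 = a b⁻¹`. -/
def orth [InverseSemigroupWithZero S] (a b : S) : Prop := a⁻¹ * b = 0 ∧ a * b⁻¹ = 0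

/-- `u` is the least upper bound (join) of `a` and `b` in the natural partial order. -/
def isJoin [InverseSemigroup S] (u a b : S) : Prop :=
  nle a u ∧ nle b u ∧ ∀ c, nle a c → nle b c → nle u c

/-- `m` is the greatest lower bound (meet) of `a` and `b` in the natural partial order. -/
def isMeet [InverseSemigroup S] (m a b : S) : Prop :=
  nle m a ∧ nle m b ∧ ∀ c, nle c a → nle c b → nle c m

/-- `c = a ∖ b`: `c ≤ a`, `c ⊥ b` and `a = b ∨ c`. -/
def isDiff [InverseSemigroupWithZero S] (c a b : S) : Prop :=
  nle c a ∧ orth c b ∧ isJoin a b c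

end Defs

/-- A distributive inverse semigroup: compatible pairs have joins, and
multiplication distributes over such joins. -/
class DistributiveInverseSemigroup (S : Type*) extends InverseSemigroupWithZero S where
  join_exists : ∀ a b : S, compat a b → ∃ u, isJoin u a b
  mul_join_left : ∀ a b u c : S, isJoin u a b → isJoin (c * u) (c * a) (c * b)
  mul_join_right : ∀ a b u c : S, isJoin u a b → isJoin (u * c) (a * c) (b * c)

/-- A Boolean inverse semigroup: a distributive inverse semigroup whose idempotents
form a (generalized) Boolean algebra, i.e. relative complements of idempotents exist. -/
class BooleanInverseSemigroup (S : Type*) extends DistributiveInverseSemigroup S where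
  relcomp : ∀ e f : S, IsIdempotentElem e → IsIdempotentElem f → nle f e →
    ∃ c, IsIdempotentElem c ∧ isDiff c e f

/-!
The candidate `c₁ c₂` lies below `s u` and is orthogonal to both `s v` and `t u`, hence to their
join `j`. Distributivity gives `s u = t u ∨ c₁ u` and `c₁ u = c₁ v ∨ c₁ c₂`, and `c₁ v ≤ s v`, so
every upper bound of `j` and `c₁ c₂` lies above `s u`. Thus `c₁ c₂` satisfies the defining
properties of `s u ∖ j`, and relative complements are unique.
-/

namespace InverseSemigroup

section InverseSemigroup

variable {S : Type*} [InverseSemigroup S] {a b c d e f g : S}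

protected theorem inv_inv (a : S) : a⁻¹⁻¹ = a :=
  (inv_unique a⁻¹ a (inv_mul_inv a) (mul_inv_mul a)).symm

theorem inv_eq_self_of_isIdempotentElem (he : IsIdempotentElem e) : e⁻¹ = e :=
  (inv_unique e e (by rw [he.eq, he.eq]) (by rw [he.eq, he.eq])).symm

theorem isIdempotentElem_inv_mul (a : S) : IsIdempotentElem (a⁻¹ * a) := by
  rw [IsIdempotentElem, ← mul_assoc, inv_mul_inv]

theorem isIdempotentElem_mul_inv (a : S) : IsIdempotentElem (a * a⁻¹) := by
  rw [IsIdempotentElem, ← mul_assoc, mul_inv_mul]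

theorem isIdempotentElem_mul (he : IsIdempotentElem e) (hf : IsIdempotentElem f) :
    IsIdempotentElem (e * f) := by
  set x := (e * f)⁻¹
  have hx : x * (e * (f * (x * e))) = x * e := by
    simpa only [mul_assoc] using congrArg (· * e) (inv_mul_inv (e * f))
  -- `f x e` is a second inverse of `e f`, so it is `x`; it is visibly idempotent.
  have hfxe : f * x * e = x := by
    refine inv_unique (e * f) (f * x * e) ?_ ?_
    · simpa only [mul_assoc, he.mul_self_mul, hf.mul_self_mul] using mul_inv_mul (e * f)
    · simp only [mul_assoc, he.mul_self_mul, hf.mul_self_mul, hx]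
  have hx_idem : IsIdempotentElem x := by
    rw [IsIdempotentElem]
    conv_lhs => rw [← hfxe]
    simp only [mul_assoc, hx]
    simpa only [mul_assoc] using hfxe
  rwa [← InverseSemigroup.inv_inv (e * f), inv_eq_self_of_isIdempotentElem hx_idem]

theorem commute_of_isIdempotentElem (he : IsIdempotentElem e) (hf : IsIdempotentElem f) :
    Commute e f := by
  have hef := isIdempotentElem_mul he hf
  have hfe := isIdempotentElem_mul hf he
  have h : f * e = (e * f)⁻¹ := by
    refine inv_unique (e * f) (f * e) ?_ ?_
    · simpa only [mul_assoc, he.mul_self_mul, hf.mul_self_mul] using hef.eq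
    · simpa only [mul_assoc, he.mul_self_mul, hf.mul_self_mul] using hfe.eq
  exact (h.trans (inv_eq_self_of_isIdempotentElem hef)).symm

protected theorem mul_inv_rev (a b : S) : (a * b)⁻¹ = b⁻¹ * a⁻¹ := by
  have hcomm := commute_of_isIdempotentElem (isIdempotentElem_inv_mul a)
    (isIdempotentElem_mul_inv b)
  refine (inv_unique _ _ ?_ ?_).symm
  · calc a * b * (b⁻¹ * a⁻¹) * (a * b) = a * ((b * b⁻¹) * (a⁻¹ * a)) * b := by
          simp only [mul_assoc]
      _ = a * a⁻¹ * a * (b * b⁻¹ * b) := by rw [← hcomm.eq]; simp only [mul_assoc]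
      _ = a * b := by rw [mul_inv_mul, mul_inv_mul]
  · calc b⁻¹ * a⁻¹ * (a * b) * (b⁻¹ * a⁻¹) = b⁻¹ * ((a⁻¹ * a) * (b * b⁻¹)) * a⁻¹ := by
          simp only [mul_assoc]
      _ = b⁻¹ * b * b⁻¹ * (a⁻¹ * a * a⁻¹) := by rw [hcomm.eq]; simp only [mul_assoc]
      _ = b⁻¹ * a⁻¹ := by rw [inv_mul_inv, inv_mul_inv]

theorem isIdempotentElem_conj (he : IsIdempotentElem e) (x : S) :
    IsIdempotentElem (x⁻¹ * e * x) := by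
  have hcomm := commute_of_isIdempotentElem he (isIdempotentElem_mul_inv x)
  calc x⁻¹ * e * x * (x⁻¹ * e * x) = x⁻¹ * (e * (x * x⁻¹)) * e * x := by simp only [mul_assoc]
    _ = x⁻¹ * x * x⁻¹ * (e * e) * x := by rw [hcomm.eq]; simp only [mul_assoc]
    _ = x⁻¹ * e * x := by rw [inv_mul_inv, he.eq]

theorem idem_mul_eq_mul_conj (he : IsIdempotentElem e) (x : S) :
    e * x = x * (x⁻¹ * e * x) := by
  calc e * x = e * (x * x⁻¹) * x := by rw [mul_assoc, mul_inv_mul]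
    _ = x * (x⁻¹ * e * x) := by
        rw [(commute_of_isIdempotentElem he (isIdempotentElem_mul_inv x)).eq]
        simp only [mul_assoc]

theorem nle_refl (a : S) : nle a a := by
  rw [nle, ← mul_assoc, mul_inv_mul]

theorem inv_eq_of_nle (h : nle a b) : a⁻¹ = a⁻¹ * a * b⁻¹ := by
  conv_lhs => rw [h]
  rw [InverseSemigroup.mul_inv_rev, inv_eq_self_of_isIdempotentElem (isIdempotentElem_inv_mul a)]

theorem nle_of_eq_mul (hg : IsIdempotentElem g) (h : a = b * g) : nle a b := by
  have hcomm := commute_of_isIdempotentElem hg (isIdempotentElem_inv_mul b)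
  have ha : a⁻¹ * a = b⁻¹ * b * g := by
    rw [h, InverseSemigroup.mul_inv_rev, inv_eq_self_of_isIdempotentElem hg]
    calc g * b⁻¹ * (b * g) = g * (b⁻¹ * b) * g := by simp only [mul_assoc]
      _ = b⁻¹ * b * g := by rw [hcomm.eq, mul_assoc, hg.eq]
  rw [nle, ha, ← mul_assoc, ← mul_assoc, mul_inv_mul, ← h]

theorem nle_of_eq_idem_mul (hg : IsIdempotentElem g) (h : a = g * b) : nle a b :=
  nle_of_eq_mul (isIdempotentElem_conj hg b) (h.trans (idem_mul_eq_mul_conj hg b))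

theorem nle_trans (hab : nle a b) (hbc : nle b c) : nle a c := by
  refine nle_of_eq_mul
    (isIdempotentElem_mul (isIdempotentElem_inv_mul b) (isIdempotentElem_inv_mul a)) ?_
  rw [← mul_assoc, ← hbc, ← hab]

theorem nle_antisymm (hab : nle a b) (hba : nle b a) : a = b := by
  have hcomm := commute_of_isIdempotentElem (isIdempotentElem_inv_mul b)
    (isIdempotentElem_inv_mul a)
  calc a = a * (b⁻¹ * b) * (a⁻¹ * a) := by rw [← hba, ← hab]
    _ = a * a⁻¹ * a * (b⁻¹ * b) := by rw [mul_assoc, hcomm.eq]; simp only [mul_assoc]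
    _ = b := by rw [mul_inv_mul, ← hba]

theorem nle_mul (hab : nle a b) (hcd : nle c d) : nle (a * c) (b * d) := by
  refine nle_of_eq_mul (isIdempotentElem_mul
    (isIdempotentElem_conj (isIdempotentElem_inv_mul a) d) (isIdempotentElem_inv_mul c)) ?_
  calc a * c = b * ((a⁻¹ * a) * d) * (c⁻¹ * c) := by
        conv_lhs => rw [hab, hcd]
        simp only [mul_assoc]
    _ = b * d * (d⁻¹ * (a⁻¹ * a) * d * (c⁻¹ * c)) := by
        rw [idem_mul_eq_mul_conj (isIdempotentElem_inv_mul a) d]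
        simp only [mul_assoc]

theorem nle_inv (h : nle a b) : nle a⁻¹ b⁻¹ :=
  nle_of_eq_idem_mul (isIdempotentElem_inv_mul a) (inv_eq_of_nle h)

theorem isJoin_unique {u u' a b : S} (h : isJoin u a b) (h' : isJoin u' a b) : u = u' :=
  nle_antisymm (h.2.2 u' h'.1 h'.2.1) (h'.2.2 u h.1 h.2.1)

theorem isJoin_of_nle (h : nle a b) : isJoin b a b :=
  ⟨h, nle_refl b, fun _ _ hb => hb⟩

theorem isJoin_inv {u : S} (h : isJoin u a b) : isJoin u⁻¹ a⁻¹ b⁻¹ := by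
  refine ⟨nle_inv h.1, nle_inv h.2.1, fun c hac hbc => ?_⟩
  have hu := nle_inv (h.2.2 c⁻¹
    (InverseSemigroup.inv_inv a ▸ nle_inv hac) (InverseSemigroup.inv_inv b ▸ nle_inv hbc))
  rwa [InverseSemigroup.inv_inv] at hu

end InverseSemigroup

section WithZero

variable {S : Type*} [InverseSemigroupWithZero S] {a b c d : S}

protected theorem zero_inv : (0 : S)⁻¹ = 0 := by
  have h : (0 : S) * 0 * 0 = 0 := by
    rw [InverseSemigroupWithZero.zero_mul, InverseSemigroupWithZero.zero_mul]
  exact (inv_unique (0 : S) 0 h h).symm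

theorem nle_zero (a : S) : nle 0 a := by
  rw [nle, InverseSemigroup.zero_inv, InverseSemigroupWithZero.zero_mul,
    InverseSemigroupWithZero.mul_zero]

theorem eq_of_isJoin_zero_left {u : S} (h : isJoin u 0 a) : u = a :=
  isJoin_unique h (isJoin_of_nle (nle_zero a))

theorem orth_inv (h : orth a b) : orth a⁻¹ b⁻¹ := by
  rw [orth, InverseSemigroup.inv_inv, InverseSemigroup.inv_inv]
  exact h.symm

theorem orth_mul_of_nle_of_orth (hab : nle a b) (hcd : orth c d) : orth (a * c) (b * d) := by
  have hab_idem : IsIdempotentElem (a⁻¹ * b) := by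
    rw [inv_eq_of_nle hab, mul_assoc]
    exact isIdempotentElem_mul (isIdempotentElem_inv_mul a) (isIdempotentElem_inv_mul b)
  constructor
  · calc (a * c)⁻¹ * (b * d) = c⁻¹ * (a⁻¹ * b * d) := by
          rw [InverseSemigroup.mul_inv_rev]; simp only [mul_assoc]
      _ = 0 := by
          rw [idem_mul_eq_mul_conj hab_idem d, ← mul_assoc, hcd.1,
            InverseSemigroupWithZero.zero_mul]
  · calc (a * c) * (b * d)⁻¹ = a * (c * d⁻¹) * b⁻¹ := by
          rw [InverseSemigroup.mul_inv_rev]; simp only [mul_assoc]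
      _ = 0 := by
          rw [hcd.2, InverseSemigroupWithZero.mul_zero, InverseSemigroupWithZero.zero_mul]

theorem orth_mul_of_orth_of_nle (hab : orth a b) (hcd : nle c d) : orth (a * c) (b * d) := by
  have h := orth_inv (orth_mul_of_nle_of_orth (nle_inv hcd) (orth_inv hab))
  simpa only [InverseSemigroup.mul_inv_rev, InverseSemigroup.inv_inv] using h

end WithZero

section Distributive

variable {S : Type*} [DistributiveInverseSemigroup S]

theorem orth_of_isJoin {x u a b : S} (ha : orth x a) (hb : orth x b) (h : isJoin u a b) :
    orth x u := by
  have h₁ := DistributiveInverseSemigroup.mul_join_left a b u x⁻¹ h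
  have h₂ := DistributiveInverseSemigroup.mul_join_left a⁻¹ b⁻¹ u⁻¹ x (isJoin_inv h)
  rw [ha.1, hb.1] at h₁
  rw [ha.2, hb.2] at h₂
  exact ⟨eq_of_isJoin_zero_left h₁, eq_of_isJoin_zero_left h₂⟩

-- Right multiplication by `c⁻¹ c` turns `a = b ∨ c'` into `c = 0 ∨ c' c⁻¹ c`.
theorem nle_of_isDiff {c c' a b : S} (h : isDiff c a b) (h' : isDiff c' a b) : nle c c' := by
  obtain ⟨hca, hcb, -⟩ := h
  have hbc : b * c⁻¹ = 0 := by
    rw [← InverseSemigroup.inv_inv b, ← InverseSemigroup.mul_inv_rev, hcb.2,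
      InverseSemigroup.zero_inv]
  have hj := DistributiveInverseSemigroup.mul_join_right b c' a (c⁻¹ * c) h'.2.2
  rw [← hca, ← mul_assoc, hbc, InverseSemigroupWithZero.zero_mul] at hj
  exact eq_of_isJoin_zero_left hj

theorem isDiff_unique {c c' a b : S} (h : isDiff c a b) (h' : isDiff c' a b) : c = c' :=
  nle_antisymm (nle_of_isDiff h h') (nle_of_isDiff h' h)

theorem isJoin_mul_of_isJoin {s t u v c₁ c₂ j : S} (hts : nle t s) (hvu : nle v u)
    (hs : isJoin s t c₁) (hu : isJoin u v c₂) (hj : isJoin j (s * v) (t * u)) :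
    isJoin (s * u) j (c₁ * c₂) := by
  refine ⟨hj.2.2 _ (nle_mul (nle_refl s) hvu) (nle_mul hts (nle_refl u)),
    nle_mul hs.2.1 hu.2.1, fun c hjc hc => ?_⟩
  have hc₁v : nle (c₁ * v) c :=
    nle_trans (DistributiveInverseSemigroup.mul_join_right t c₁ s v hs).2.1
      (nle_trans hj.1 hjc)
  have hc₁u : nle (c₁ * u) c :=
    (DistributiveInverseSemigroup.mul_join_left v c₂ u c₁ hu).2.2 c hc₁v hc
  exact (DistributiveInverseSemigroup.mul_join_right t c₁ s u hs).2.2 c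
    (nle_trans hj.2.1 hjc) hc₁u

end Distributive

end InverseSemigroup

open InverseSemigroup

/-- In a Boolean inverse semigroup, `(s ∖ t)(u ∖ v) = s u ∖ (s v ∨ t u)` for
`t ≤ s` and `v ≤ u`. -/
theorem stmt8 {S : Type*} [BooleanInverseSemigroup S] (s t u v c1 c2 j c3 : S)
    (hts : nle t s) (hvu : nle v u)
    (h1 : isDiff c1 s t) (h2 : isDiff c2 u v)
    (hj : isJoin j (s * v) (t * u)) (h3 : isDiff c3 (s * u) j) :
    c1 * c2 = c3 := by
  obtain ⟨hc1s, hc1t, hs⟩ := h1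
  obtain ⟨hc2u, hc2v, hu⟩ := h2
  have horth : orth (c1 * c2) j :=
    orth_of_isJoin (orth_mul_of_nle_of_orth hc1s hc2v) (orth_mul_of_orth_of_nle hc1t hc2u) hj
  exact isDiff_unique ⟨nle_mul hc1s hc2u, horth, isJoin_mul_of_isJoin hts hvu hs hu hj⟩ h3
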